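/- Let (H,R) be a quasitriangular Hopf algebra and define the transmuted comultiplication on H by Δ̲(x) = Σ x₁S(R²) ⊗ (R¹ ▷ x₂), where h ▷ y = h₁yS(h₂). Then Δ̲(x) = Σ (R² ▷ x₂) ⊗ R¹x₁ for all x ∈ H. -/

import Mathlib

open TensorProduct

noncomputable section

/-- Scalar multiplication by a fixed `h : H` as a `k`-linear map. -/
def smulL (k : Type) {H M : Type} [CommRing k] [Ring H] [AddCommGroup M]
    [Module k M] [Module H M] [SMulCommClass H k M] (h : H) : M →ₗ[k] M where
  toFun m := h • m
  map_add' := smul_add h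
  map_smul' c m := smul_comm h c m

/-- The module action `H ⊗ M → M` as a linear map. -/
def actT (k H M : Type) [CommRing k] [Ring H] [Algebra k H] [AddCommGroup M]
    [Module k M] [Module H M] [IsScalarTower k H M] [SMulCommClass H k M] :
    H ⊗[k] M →ₗ[k] M :=
  TensorProduct.lift
    { toFun := fun h => smulL k h
      map_add' := fun h h' => LinearMap.ext fun m => add_smul h h' m
      map_smul' := fun c h => LinearMap.ext fun m => smul_assoc c h m }

/-- Quasitriangular structure, with the R-matrix given by a finite family
`R = ∑ i, R1 i ⊗ R2 i`, satisfying (QT1)-(QT4) and invertibility. -/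
structure QT (k H : Type) [CommRing k] [Ring H] [HopfAlgebra k H]
    {ι : Type} [Fintype ι] (R1 R2 : ι → H) : Prop where
  qt1a : ∑ i, Coalgebra.counit (R := k) (R1 i) • R2 i = (1 : H)
  qt1b : ∑ i, Coalgebra.counit (R := k) (R2 i) • R1 i = (1 : H)
  qt2 : ∑ i, Coalgebra.comul (R := k) (R1 i) ⊗ₜ[k] R2 i
      = ∑ i, ∑ j, (R1 i ⊗ₜ[k] R1 j) ⊗ₜ[k] (R2 i * R2 j)
  qt3 : ∑ i, R1 i ⊗ₜ[k] Coalgebra.comul (R := k) (R2 i)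
      = ∑ i, ∑ j, (R1 i * R1 j) ⊗ₜ[k] (R2 j ⊗ₜ[k] R2 i)
  qt4 : ∀ h : H, (∑ i, R1 i ⊗ₜ[k] R2 i) * Coalgebra.comul (R := k) h
      = TensorProduct.comm k H H (Coalgebra.comul (R := k) h) * (∑ i, R1 i ⊗ₜ[k] R2 i)
  isUnit : IsUnit (∑ i, R1 i ⊗ₜ[k] R2 i)

/-- The left adjoint action `h ⊗ x ↦ h₁ x S(h₂)` as a linear map. -/
def adjT (k H : Type) [CommRing k] [Ring H] [HopfAlgebra k H] : H ⊗[k] H →ₗ[k] H :=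
  (LinearMap.mul' k H) ∘ₗ
    (LinearMap.lTensor H (LinearMap.mul' k H)) ∘ₗ
    (LinearMap.lTensor H ((TensorProduct.map (LinearMap.id : H →ₗ[k] H)
        (HopfAlgebra.antipode (R := k))) ∘ₗ (TensorProduct.comm k H H).toLinearMap)) ∘ₗ
    (TensorProduct.assoc k H H H).toLinearMap ∘ₗ
    (LinearMap.rTensor H (Coalgebra.comul (R := k)))

/-- The diagonal action of `H` on `M ⊗ N`, `h ⊗ (m ⊗ n) ↦ h₁·m ⊗ h₂·n`. -/
def actD (k H M N : Type) [CommRing k] [Ring H] [HopfAlgebra k H]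
    [AddCommGroup M] [Module k M] [Module H M] [IsScalarTower k H M] [SMulCommClass H k M]
    [AddCommGroup N] [Module k N] [Module H N] [IsScalarTower k H N] [SMulCommClass H k N] :
    H ⊗[k] (M ⊗[k] N) →ₗ[k] M ⊗[k] N :=
  (TensorProduct.map (actT k H M) (actT k H N)) ∘ₗ
    (TensorProduct.tensorTensorTensorComm k H H M N).toLinearMap ∘ₗ
    (LinearMap.rTensor (M ⊗[k] N) (Coalgebra.comul (R := k)))

/-- Left-hand side of the Yetter-Drinfeld compatibility condition,
`h ⊗ m ↦ h₁ m₍₋₁₎ ⊗ h₂ · m₍₀₎`, relative to an action map `act` and coaction `lam`. -/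
def ydLa (k H M : Type) [CommRing k] [Ring H] [HopfAlgebra k H] [AddCommGroup M] [Module k M]
    (act : H ⊗[k] M →ₗ[k] M) (lam : M →ₗ[k] H ⊗[k] M) : H ⊗[k] M →ₗ[k] H ⊗[k] M :=
  (TensorProduct.map (LinearMap.mul' k H) act) ∘ₗ
    (TensorProduct.tensorTensorTensorComm k H H H M).toLinearMap ∘ₗ
    (TensorProduct.map (Coalgebra.comul (R := k)) lam)

/-- Right-hand side of the Yetter-Drinfeld compatibility condition,
`h ⊗ m ↦ (h₁·m)₍₋₁₎ h₂ ⊗ (h₁·m)₍₀₎`. -/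
def ydRa (k H M : Type) [CommRing k] [Ring H] [HopfAlgebra k H] [AddCommGroup M] [Module k M]
    (act : H ⊗[k] M →ₗ[k] M) (lam : M →ₗ[k] H ⊗[k] M) : H ⊗[k] M →ₗ[k] H ⊗[k] M :=
  (LinearMap.rTensor M ((LinearMap.mul' k H) ∘ₗ (TensorProduct.comm k H H).toLinearMap)) ∘ₗ
    (TensorProduct.assoc k H H M).symm.toLinearMap ∘ₗ
    (LinearMap.lTensor H (lam ∘ₗ act)) ∘ₗ
    (TensorProduct.assoc k H H M).toLinearMap ∘ₗ
    (LinearMap.rTensor M (TensorProduct.comm k H H).toLinearMap) ∘ₗ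
    (LinearMap.rTensor M (Coalgebra.comul (R := k)))


section Transmutation

variable (k H : Type) [Field k] [Ring H] [HopfAlgebra k H]
variable {ι : Type} [Fintype ι] (R1 R2 : ι → H)

/-- The transmuted comultiplication `Δ̲(x) = ∑ x₁S(R²) ⊗ (R¹ ▷ x₂)`. -/
def transComul : H →ₗ[k] H ⊗[k] H :=
  ∑ i, (TensorProduct.map (LinearMap.mulRight k (HopfAlgebra.antipode (R := k) (R2 i)))
      ((adjT k H) ∘ₗ (TensorProduct.mk k H H (R1 i)))) ∘ₗ (Coalgebra.comul (R := k))

/-- The alternative form `∑ (R² ▷ x₂) ⊗ R¹x₁`. -/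
def transComul' : H →ₗ[k] H ⊗[k] H :=
  ∑ i, (TensorProduct.map ((adjT k H) ∘ₗ (TensorProduct.mk k H H (R2 i)))
      (LinearMap.mulLeft k (R1 i))) ∘ₗ
    (TensorProduct.comm k H H).toLinearMap ∘ₗ (Coalgebra.comul (R := k))


end Transmutation

/-! The map `rTwist : a ⊗ b ↦ ∑ b S(R²) ⊗ R¹a` carries both sides. Expanding `R¹ ▷ x₂` with
`(Δ ⊗ id)R = R₁₃R₂₃` and then using `(S ⊗ S)R = R` shows `Δ̲(x) = rTwist (Δᵒᵖ(x) R)`; expanding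
`R² ▷ x₂` with `(id ⊗ Δ)R = R₁₃R₁₂` shows that the other side is `rTwist (R Δ(x))`. These agree by
(QT4). The identity `(S ⊗ S)R = R` comes from `R⁻¹ = (S ⊗ id)R`. -/

open Coalgebra HopfAlgebra

theorem adjT_tmul {k H : Type} [CommRing k] [Ring H] [HopfAlgebra k H] (h y : H) :
    adjT k H (h ⊗ₜ y) =
      LinearMap.mul' k H ((LinearMap.mulLeft k y ∘ₗ antipode k).lTensor H (comul h)) := by
  simp only [adjT, LinearMap.comp_apply, LinearMap.rTensor_tmul]
  induction comul (R := k) h using TensorProduct.induction_on with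
  | zero => simp only [zero_tmul, map_zero]
  | tmul a b => simp
  | add u v hu hv => simp only [add_tmul, map_add, hu, hv]

section Twist

variable {k H : Type} [CommRing k] [Ring H] [HopfAlgebra k H]
variable {ι : Type} [Fintype ι] (R1 R2 : ι → H)

def rTwist : H ⊗[k] H →ₗ[k] H ⊗[k] H :=
  ∑ i, TensorProduct.map (LinearMap.mulRight k (antipode k (R2 i)))
    (LinearMap.mulLeft k (R1 i)) ∘ₗ (TensorProduct.comm k H H).toLinearMap

theorem rTwist_tmul (a b : H) :
    rTwist R1 R2 (a ⊗ₜ b) = ∑ i, (b * antipode k (R2 i)) ⊗ₜ[k] (R1 i * a) := by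
  simp [rTwist]

end Twist

namespace QT

variable {k H : Type} [CommRing k] [Ring H] [HopfAlgebra k H]
variable {ι : Type} [Fintype ι] {R1 R2 : ι → H}

local notation "S" => antipode k (A := H)

theorem sum_sum_tmul_mul_eq_one (hqt : QT k H R1 R2) (f : H ⊗[k] H →ₗ[k] H)
    (hf : ∀ a, f (comul a) = algebraMap k H (counit a)) :
    ∑ i, ∑ j, f (R1 i ⊗ₜ R1 j) ⊗ₜ[k] (R2 i * R2 j) = 1 := by
  have h := congrArg (LinearMap.rTensor H f) hqt.qt2
  simp only [map_sum, LinearMap.rTensor_tmul, hf] at h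
  simp_rw [← h, Algebra.algebraMap_eq_smul_one, TensorProduct.smul_tmul, ← tmul_sum, hqt.qt1a]
  rfl

theorem antipode_rmat_mul_rmat (hqt : QT k H R1 R2) :
    (∑ i, S (R1 i) ⊗ₜ[k] R2 i) * (∑ i, R1 i ⊗ₜ[k] R2 i) = 1 := by
  simpa [Finset.sum_mul_sum, Algebra.TensorProduct.tmul_mul_tmul] using
    hqt.sum_sum_tmul_mul_eq_one (LinearMap.mul' k H ∘ₗ (S : H →ₗ[k] H).rTensor H)
      mul_antipode_rTensor_comul_apply

theorem rmat_mul_antipode_rmat (hqt : QT k H R1 R2) :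
    (∑ i, R1 i ⊗ₜ[k] R2 i) * (∑ i, S (R1 i) ⊗ₜ[k] R2 i) = 1 := by
  simpa [Finset.sum_mul_sum, Algebra.TensorProduct.tmul_mul_tmul] using
    hqt.sum_sum_tmul_mul_eq_one (LinearMap.mul' k H ∘ₗ (S : H →ₗ[k] H).lTensor H)
      mul_antipode_lTensor_comul_apply

open Algebra.TensorProduct in
/-- `id ⊗ Δ` is an algebra map, so it sends `R⁻¹ = (S ⊗ id)R` to `(R₁₃R₁₂)⁻¹ = R₁₂⁻¹R₁₃⁻¹`. -/
theorem sum_antipode_tmul_comul (hqt : QT k H R1 R2) :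
    ∑ i, S (R1 i) ⊗ₜ[k] comul (R := k) (R2 i)
      = ∑ i, ∑ j, (S (R1 i) * S (R1 j)) ⊗ₜ[k] (R2 i ⊗ₜ[k] R2 j) := by
  set Rm := ∑ i, R1 i ⊗ₜ[k] R2 i
  set A := ∑ i, S (R1 i) ⊗ₜ[k] R2 i
  let D := map (AlgHom.id k H) (Bialgebra.comulAlgHom k H)
  let e12 := map (AlgHom.id k H) (includeLeft : H →ₐ[k] H ⊗[k] H)
  let e13 := map (AlgHom.id k H) (includeRight : H →ₐ[k] H ⊗[k] H)
  have hDR : D Rm = e13 Rm * e12 Rm := by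
    simp only [Rm, D, e12, e13, map_sum, Algebra.TensorProduct.map_tmul, AlgHom.coe_id, id_eq,
      Bialgebra.comulAlgHom_apply, hqt.qt3, Finset.sum_mul_sum, includeLeft_apply,
      includeRight_apply, tmul_mul_tmul, one_mul, mul_one]
  have hAR : A * Rm = 1 := hqt.antipode_rmat_mul_rmat
  have hRA : Rm * A = 1 := hqt.rmat_mul_antipode_rmat
  have hDA : D A = e12 A * e13 A := by
    refine left_inv_eq_right_inv (a := D Rm) ?_ ?_
    · rw [← map_mul, hAR, map_one]
    · rw [hDR, mul_assoc, ← mul_assoc (e12 Rm), ← map_mul, hRA, map_one, one_mul,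
        ← map_mul, hRA, map_one]
  simpa [A, D, e12, e13, map_sum, Finset.sum_mul_sum, tmul_mul_tmul] using hDA

/-- Applying `id ⊗ μ(S ⊗ id)` to `sum_antipode_tmul_comul` gives `(S ⊗ S)R · R⁻¹ = 1`. -/
theorem sum_antipode_tmul_antipode (hqt : QT k H R1 R2) :
    ∑ i, S (R1 i) ⊗ₜ[k] S (R2 i) = ∑ i, R1 i ⊗ₜ[k] R2 i := by
  have h := congrArg (LinearMap.lTensor H (LinearMap.mul' k H ∘ₗ (S : H →ₗ[k] H).rTensor H))
    hqt.sum_antipode_tmul_comul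
  simp only [map_sum, LinearMap.lTensor_tmul, LinearMap.comp_apply,
    mul_antipode_rTensor_comul_apply, LinearMap.rTensor_tmul, LinearMap.mul'_apply] at h
  have hBA : (∑ i, S (R1 i) ⊗ₜ[k] S (R2 i)) * (∑ i, S (R1 i) ⊗ₜ[k] R2 i) = 1 := by
    have hε : ∑ i, S (R1 i) ⊗ₜ[k] algebraMap k H (counit (R2 i)) = 1 := by
      simp_rw [Algebra.algebraMap_eq_smul_one, ← TensorProduct.smul_tmul, ← LinearMap.map_smul,
        ← sum_tmul, ← map_sum, hqt.qt1b, antipode_one]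
      rfl
    rw [← hε, h, Finset.sum_mul_sum]
    simp only [Algebra.TensorProduct.tmul_mul_tmul]
  exact left_inv_eq_right_inv hBA hqt.antipode_rmat_mul_rmat

theorem sum_adjT_tmul (hqt : QT k H R1 R2) (q : H) :
    ∑ i, adjT k H (R1 i ⊗ₜ q) ⊗ₜ[k] R2 i
      = ∑ i, ∑ j, (R1 i * (q * S (R1 j))) ⊗ₜ[k] (R2 i * R2 j) := by
  have h := congrArg
    (LinearMap.rTensor H (LinearMap.mul' k H ∘ₗ (LinearMap.mulLeft k q ∘ₗ S).lTensor H)) hqt.qt2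
  simpa [adjT_tmul] using h

theorem sum_tmul_adjT (hqt : QT k H R1 R2) (q : H) :
    ∑ i, R1 i ⊗ₜ[k] adjT k H (R2 i ⊗ₜ q)
      = ∑ i, ∑ j, (R1 i * R1 j) ⊗ₜ[k] (R2 j * (q * S (R2 i))) := by
  have h := congrArg
    (LinearMap.lTensor H (LinearMap.mul' k H ∘ₗ (LinearMap.mulLeft k q ∘ₗ S).lTensor H)) hqt.qt3
  simpa [adjT_tmul] using h

theorem sum_map_adjT_eq_rTwist (hqt : QT k H R1 R2) :
    ∑ i, TensorProduct.map (LinearMap.mulRight k (S (R2 i)))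
        (adjT k H ∘ₗ TensorProduct.mk k H H (R1 i))
      = rTwist R1 R2 ∘ₗ LinearMap.mulRight k (∑ i, R1 i ⊗ₜ[k] R2 i) ∘ₗ
          (TensorProduct.comm k H H).toLinearMap := by
  refine TensorProduct.ext' fun p q => ?_
  have hΔ := congrArg (TensorProduct.map (LinearMap.mulLeft k p ∘ₗ S) LinearMap.id ∘ₗ
    (TensorProduct.comm k H H).toLinearMap) (hqt.sum_adjT_tmul q)
  have hSS (i : ι) := congrArg
    (TensorProduct.map (LinearMap.mulLeft k p ∘ₗ LinearMap.mulRight k (S (R2 i)))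
      (LinearMap.mulLeft k (R1 i * q)) ∘ₗ (TensorProduct.comm k H H).toLinearMap)
    hqt.sum_antipode_tmul_antipode
  simp only [map_sum, LinearMap.comp_apply, LinearEquiv.coe_coe, comm_tmul, map_tmul,
    LinearMap.mulLeft_apply, LinearMap.mulRight_apply, LinearMap.id_apply,
    antipode_mul_antidistrib] at hΔ hSS
  simp only [LinearMap.sum_apply, map_tmul, LinearMap.mulRight_apply, LinearMap.comp_apply,
    mk_apply, hΔ, LinearEquiv.coe_coe, comm_tmul, Finset.mul_sum,
    Algebra.TensorProduct.tmul_mul_tmul, map_sum, rTwist_tmul]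
  conv_rhs => rw [Finset.sum_comm]
  refine Finset.sum_congr rfl fun i _ => ?_
  simpa only [mul_assoc] using hSS i

theorem sum_map_adjT_comm_eq_rTwist (hqt : QT k H R1 R2) :
    (∑ i, TensorProduct.map (adjT k H ∘ₗ TensorProduct.mk k H H (R2 i))
        (LinearMap.mulLeft k (R1 i))) ∘ₗ (TensorProduct.comm k H H).toLinearMap
      = rTwist R1 R2 ∘ₗ LinearMap.mulLeft k (∑ i, R1 i ⊗ₜ[k] R2 i) := by
  refine TensorProduct.ext' fun p q => ?_
  have h := congrArg ((TensorProduct.comm k H H).toLinearMap ∘ₗ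
    TensorProduct.map (LinearMap.mulRight k p) LinearMap.id) (hqt.sum_tmul_adjT q)
  simp only [map_sum, LinearMap.comp_apply, LinearEquiv.coe_coe, comm_tmul, map_tmul,
    LinearMap.mulRight_apply, LinearMap.id_apply] at h
  simp only [LinearMap.comp_apply, LinearEquiv.coe_coe, comm_tmul, LinearMap.sum_apply,
    map_tmul, mk_apply, LinearMap.mulLeft_apply, h, Finset.sum_mul,
    Algebra.TensorProduct.tmul_mul_tmul, map_sum, rTwist_tmul]
  rw [Finset.sum_comm]
  simp only [mul_assoc]

end QT

section Transmutation

variable (k H : Type) [Field k] [Ring H] [HopfAlgebra k H]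
variable {ι : Type} [Fintype ι] (R1 R2 : ι → H)

theorem transComul_eq (hqt : QT k H R1 R2) :
    transComul k H R1 R2 = transComul' k H R1 R2 := by
  ext x
  calc transComul k H R1 R2 x
      = (∑ i, TensorProduct.map (LinearMap.mulRight k (antipode k (R2 i)))
          (adjT k H ∘ₗ TensorProduct.mk k H H (R1 i))) (comul x) := by
        simp only [transComul, LinearMap.sum_apply, LinearMap.comp_apply]
    _ = rTwist R1 R2 (TensorProduct.comm k H H (comul x) * ∑ i, R1 i ⊗ₜ[k] R2 i) := by
        rw [hqt.sum_map_adjT_eq_rTwist]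
        rfl
    _ = rTwist R1 R2 ((∑ i, R1 i ⊗ₜ[k] R2 i) * comul x) := by
        rw [hqt.qt4]
    _ = ((∑ i, TensorProduct.map (adjT k H ∘ₗ TensorProduct.mk k H H (R2 i))
          (LinearMap.mulLeft k (R1 i))) ∘ₗ (TensorProduct.comm k H H).toLinearMap)
            (comul x) := by
        rw [hqt.sum_map_adjT_comm_eq_rTwist]
        rfl
    _ = transComul' k H R1 R2 x := by
        simp only [transComul', LinearMap.sum_apply, LinearMap.comp_apply]

end Transmutation

end
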